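/- arXiv:1302.2857 — 3 statements merged into one kernel-verified Lean document; each statement's English description precedes it below -/
import Mathlib

section
/- Let J be a complex structure on E and define {f,g} = ⟨J(Df), Dg⟩ for f, g ∈ A. Then {·,·} satisfies the Jacobi identity: {{f,g},h} + {{g,h},f} + {{h,f},g} = 0 for all f, g, h ∈ A. -/
open scoped TensorProduct
section BC

variable {M N P : Type} [AddCommGroup M] [Module ℝ M] [AddCommGroup N] [Module ℝ N]
  [AddCommGroup P] [Module ℝ P]

/-- Complex-bilinear extension of an `ℝ`-bilinear map to the complexifications. -/
noncomputable def bcBilin (B : M →ₗ[ℝ] N →ₗ[ℝ] P) :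
    ℂ ⊗[ℝ] M →ₗ[ℂ] ℂ ⊗[ℝ] N →ₗ[ℂ] ℂ ⊗[ℝ] P :=
  LinearMap.liftBaseChange ℂ ((LinearMap.baseChangeHom ℝ ℂ N P) ∘ₗ B)

/-- Complex conjugation on the complexification `ℂ ⊗[ℝ] M`. -/
noncomputable def conjT (M : Type) [AddCommGroup M] [Module ℝ M] :
    ℂ ⊗[ℝ] M →ₗ[ℝ] ℂ ⊗[ℝ] M :=
  TensorProduct.map Complex.conjAe.toLinearMap LinearMap.id

/-- The `i`-eigenspace of a `ℂ`-linear endomorphism of `ℂ ⊗[ℝ] M`. -/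
def eigP (Jc : ℂ ⊗[ℝ] M →ₗ[ℂ] ℂ ⊗[ℝ] M) : Set (ℂ ⊗[ℝ] M) :=
  {e | Jc e = Complex.I • e}

/-- The `-i`-eigenspace of a `ℂ`-linear endomorphism of `ℂ ⊗[ℝ] M`. -/
def eigM (Jc : ℂ ⊗[ℝ] M →ₗ[ℂ] ℂ ⊗[ℝ] M) : Set (ℂ ⊗[ℝ] M) :=
  {e | Jc e = -(Complex.I • e)}

end BC

/-- An (algebraic) Courant algebroid: a commutative `ℝ`-algebra `A`, an `A`-module `E`,
a nondegenerate symmetric `A`-bilinear pairing, an anchor with values in `ℝ`-linear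
derivations of `A`, a map `Dm : A → E`, and an `ℝ`-bilinear Dorfman bracket. -/
structure CourantAlgebroid (A E : Type) [CommRing A] [Algebra ℝ A]
    [AddCommGroup E] [Module ℝ E] [Module A E] [IsScalarTower ℝ A E] : Type where
  pair : E →ₗ[A] E →ₗ[A] A
  pair_symm : ∀ x y, pair x y = pair y x
  pair_nondeg : ∀ x, (∀ y, pair x y = 0) → x = 0
  anchor : E →ₗ[A] Derivation ℝ A A
  Dm : A →ₗ[ℝ] E
  pair_Dm : ∀ (f : A) (x : E), pair (Dm f) x = (1/2 : ℝ) • anchor x f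
  brac : E →ₗ[ℝ] E →ₗ[ℝ] E
  brac_leibniz : ∀ x y z, brac x (brac y z) = brac (brac x y) z + brac y (brac x z)
  anchor_brac : ∀ (x y : E) (f : A),
    anchor (brac x y) f = anchor x (anchor y f) - anchor y (anchor x f)
  brac_smul : ∀ (f : A) (x y : E), brac x (f • y) = anchor x f • y + f • brac x y
  brac_add_swap : ∀ x y, brac x y + brac y x = (2 : ℝ) • Dm (pair x y)
  Dm_brac : ∀ (f : A) (x : E), brac (Dm f) x = 0
  anchor_pair : ∀ x y z, anchor x (pair y z) = pair (brac x y) z + pair y (brac x z)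

namespace CourantAlgebroid

variable {A E : Type} [CommRing A] [Algebra ℝ A]
    [AddCommGroup E] [Module ℝ E] [Module A E] [IsScalarTower ℝ A E]

/-- The Nijenhuis concomitant of two operators with respect to a bracket. -/
def nijGen {M : Type*} [AddCommGroup M] (br : M → M → M) (F G : M → M) (U V : M) : M :=
  br (F U) (G V) - F (br U (G V)) - G (br (F U) V) + F (G (br U V))
    + br (G U) (F V) - G (br U (F V)) - F (br (G U) V) + G (F (br U V))

/-- The Nijenhuis concomitant `N(F,G)` of two `A`-linear endomorphisms of `E`. -/
def nij (C : CourantAlgebroid A E) (F G : E →ₗ[A] E) (U V : E) : E :=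
  nijGen (fun x y => C.brac x y) (fun e => F e) (fun e => G e) U V

/-- An almost complex structure: an orthogonal endomorphism squaring to `-1`. -/
def IsAlmostComplexStr (C : CourantAlgebroid A E) (J : E →ₗ[A] E) : Prop :=
  (∀ e, J (J e) = -e) ∧ ∀ x y, C.pair (J x) (J y) = C.pair x y

/-- A complex structure: an almost complex structure with vanishing Nijenhuis concomitant. -/
def IsComplexStr (C : CourantAlgebroid A E) (J : E →ₗ[A] E) : Prop :=
  C.IsAlmostComplexStr J ∧ ∀ U V, C.nij J J U V = 0

/-- An almost hypercomplex structure: a triple of almost complex structures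
satisfying the quaternionic relations. -/
def IsAlmostHypercomplex (C : CourantAlgebroid A E) (I J K : E →ₗ[A] E) : Prop :=
  C.IsAlmostComplexStr I ∧ C.IsAlmostComplexStr J ∧ C.IsAlmostComplexStr K ∧
    ∀ e, I (J (K e)) = -e

/-- A hypercomplex structure: an almost hypercomplex structure all of whose six
Nijenhuis concomitants vanish. -/
def IsHypercomplex (C : CourantAlgebroid A E) (I J K : E →ₗ[A] E) : Prop :=
  C.IsAlmostHypercomplex I J K ∧
    (∀ U V, C.nij I I U V = 0) ∧ (∀ U V, C.nij I J U V = 0) ∧ (∀ U V, C.nij I K U V = 0) ∧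
    (∀ U V, C.nij J J U V = 0) ∧ (∀ U V, C.nij J K U V = 0) ∧ (∀ U V, C.nij K K U V = 0)

/-- The Poisson-type bracket on `A` induced by a skew-symmetric endomorphism `F`. -/
def pb (C : CourantAlgebroid A E) (F : E →ₗ[A] E) (f g : A) : A :=
  C.pair (F (C.Dm f)) (C.Dm g)

/-- `Δ_f(U,V)` associated with an almost hypercomplex triple. -/
def Delta (C : CourantAlgebroid A E) (I J K : E →ₗ[A] E) (f : A) (U V : E) : E :=
  C.pair U V • C.Dm f + C.pair (I U) V • I (C.Dm f) + C.pair (J U) V • J (C.Dm f)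
    + C.pair (K U) V • K (C.Dm f)

/-- A hypercomplex connection relative to an almost hypercomplex triple. -/
def IsHConn (C : CourantAlgebroid A E) (I J K : E →ₗ[A] E)
    (conn : E →ₗ[ℝ] E →ₗ[ℝ] E) : Prop :=
  (∀ (f : A) (U V : E), conn (f • U) V = f • conn U V) ∧
  (∀ (f : A) (U V : E),
    conn U (f • V) = C.anchor U f • V + f • conn U V - C.Delta I J K f U V)

/-- The torsion of an `ℝ`-bilinear connection. -/
noncomputable def torsion (C : CourantAlgebroid A E) (conn : E →ₗ[ℝ] E →ₗ[ℝ] E) (U V : E) : E :=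
  conn U V - conn V U - (1/2 : ℝ) • (C.brac U V - C.brac V U)

/-- The canonical hypercomplex connection. -/
noncomputable def hconn (C : CourantAlgebroid A E) (I J K : E →ₗ[A] E) (U V : E) : E :=
  -((1/2 : ℝ) • K (C.brac (J V) (I U) - J (C.brac V (I U)) - I (C.brac (J V) U)
      + J (I (C.brac V U))))

/-- The pairing as an `ℝ`-bilinear map. -/
noncomputable def pairR (C : CourantAlgebroid A E) : E →ₗ[ℝ] E →ₗ[ℝ] A :=
  LinearMap.mk₂ ℝ (fun x y => C.pair x y)
    (fun x x' y => by simp)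
    (fun r x y => by
      show C.pair (r • x) y = r • C.pair x y
      rw [← algebraMap_smul A r x, map_smul, LinearMap.smul_apply, algebraMap_smul])
    (fun x y y' => by simp)
    (fun r x y => by
      show C.pair x (r • y) = r • C.pair x y
      rw [← algebraMap_smul A r y, map_smul, algebraMap_smul])

/-- The anchor as an `ℝ`-bilinear map `E → A → A`. -/
noncomputable def rhoR (C : CourantAlgebroid A E) : E →ₗ[ℝ] A →ₗ[ℝ] A :=
  LinearMap.mk₂ ℝ (fun x f => C.anchor x f)
    (fun x x' f => by simp)
    (fun r x f => by
      show C.anchor (r • x) f = r • C.anchor x f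
      rw [← algebraMap_smul A r x, map_smul, Derivation.smul_apply, algebraMap_smul])
    (fun x f f' => by simp)
    (fun r x f => by simp)

/-- The `A`-module structure on `E` as an `ℝ`-bilinear map. -/
noncomputable def smulR (A E : Type) [CommRing A] [Algebra ℝ A]
    [AddCommGroup E] [Module ℝ E] [Module A E] [IsScalarTower ℝ A E] :
    A →ₗ[ℝ] E →ₗ[ℝ] E :=
  LinearMap.mk₂ ℝ (fun a e => a • e)
    (fun a a' e => add_smul a a' e)
    (fun r a e => smul_assoc r a e)
    (fun a e e' => smul_add a e e')
    (fun r a e => smul_comm a r e)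

/-- Complex-bilinear extension of the pairing. -/
noncomputable def pairC (C : CourantAlgebroid A E) :
    ℂ ⊗[ℝ] E →ₗ[ℂ] ℂ ⊗[ℝ] E →ₗ[ℂ] ℂ ⊗[ℝ] A := bcBilin C.pairR

/-- Complex-bilinear extension of the Dorfman bracket. -/
noncomputable def bracC (C : CourantAlgebroid A E) :
    ℂ ⊗[ℝ] E →ₗ[ℂ] ℂ ⊗[ℝ] E →ₗ[ℂ] ℂ ⊗[ℝ] E := bcBilin C.brac

/-- Complex-bilinear extension of the anchor. -/
noncomputable def rhoC (C : CourantAlgebroid A E) :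
    ℂ ⊗[ℝ] E →ₗ[ℂ] ℂ ⊗[ℝ] A →ₗ[ℂ] ℂ ⊗[ℝ] A := bcBilin C.rhoR

/-- Complex-bilinear extension of the `A`-action on `E`. -/
noncomputable def smulC (C : CourantAlgebroid A E) :
    ℂ ⊗[ℝ] A →ₗ[ℂ] ℂ ⊗[ℝ] E →ₗ[ℂ] ℂ ⊗[ℝ] E := bcBilin (smulR A E)

/-- The `ℂ`-linear extension of an `A`-linear endomorphism of `E` to `ℂ ⊗[ℝ] E`. -/
noncomputable def cext (F : E →ₗ[A] E) : ℂ ⊗[ℝ] E →ₗ[ℂ] ℂ ⊗[ℝ] E :=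
  (F.restrictScalars ℝ).baseChange ℂ

/-- `Ω^♯ = (1/2)(I + iK)` associated with an (almost) hypercomplex triple. -/
noncomputable def OmS (I K : E →ₗ[A] E) : ℂ ⊗[ℝ] E →ₗ[ℂ] ℂ ⊗[ℝ] E :=
  (1/2 : ℂ) • (cext I + Complex.I • cext K)

/-- `Ω̄^♯ = (1/2)(I - iK)` associated with an (almost) hypercomplex triple. -/
noncomputable def ObS (I K : E →ₗ[A] E) : ℂ ⊗[ℝ] E →ₗ[ℂ] ℂ ⊗[ℝ] E :=
  (1/2 : ℂ) • (cext I - Complex.I • cext K)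

/-- `Ω(ξ,η) = ⟨Ω^♯ξ, η⟩`. -/
noncomputable def Omf (C : CourantAlgebroid A E) (I K : E →ₗ[A] E)
    (x y : ℂ ⊗[ℝ] E) : ℂ ⊗[ℝ] A :=
  C.pairC (OmS I K x) y

/-- The complexified hypercomplex connection on `ℂ ⊗[ℝ] E`. -/
noncomputable def hconnC (C : CourantAlgebroid A E) (I J K : E →ₗ[A] E)
    (U V : ℂ ⊗[ℝ] E) : ℂ ⊗[ℝ] E :=
  -((1/2 : ℂ) • cext K (C.bracC (cext J V) (cext I U) - cext J (C.bracC V (cext I U))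
      - cext I (C.bracC (cext J V) U) + cext J (cext I (C.bracC V U))))

end CourantAlgebroid

open CourantAlgebroid


/-! The Hamiltonian vector field of `f` is `J (D f)`. Vanishing of `N(J,J)` on `(D f, D g)`
gives `J (D f) ∘ J (D g) = 2 J (D {f,g})`; applying the anchor, which maps the Dorfman bracket to
the commutator of derivations, yields `{{f,g},h} = {f,{g,h}} - {g,{f,h}}`, and with the
antisymmetry of `{·,·}` this is the Jacobi identity. -/

namespace CourantAlgebroid

variable {A E : Type} [CommRing A] [Algebra ℝ A] [AddCommGroup E] [Module ℝ E]
    [Module A E] [IsScalarTower ℝ A E] (C : CourantAlgebroid A E) {J : E →ₗ[A] E}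

lemma anchor_real_smul (r : ℝ) (x : E) (a : A) :
    C.anchor (r • x) a = r • C.anchor x a := by
  rw [← algebraMap_smul A r x, map_smul, Derivation.smul_apply, algebraMap_smul]

lemma anchor_J_Dm_eq_two_smul_pb (J : E →ₗ[A] E) (f g : A) :
    C.anchor (J (C.Dm f)) g = (2 : ℝ) • C.pb J f g := by
  rw [pb, C.pair_symm, C.pair_Dm, smul_smul]
  norm_num

lemma brac_Dm_eq_two_smul (x : E) (g : A) :
    C.brac x (C.Dm g) = (2 : ℝ) • C.Dm (C.pair x (C.Dm g)) := by
  simpa only [C.Dm_brac, add_zero] using C.brac_add_swap x (C.Dm g)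

lemma pb_antisymm (hJ : C.IsAlmostComplexStr J) (f g : A) :
    C.pb J f g = -C.pb J g f := by
  rw [pb, pb, ← hJ.2 (J (C.Dm f)) (C.Dm g), hJ.1 (C.Dm f), map_neg, LinearMap.neg_apply,
    C.pair_symm]

lemma pb_neg_left (J : E →ₗ[A] E) (f g : A) : C.pb J (-f) g = -C.pb J f g := by
  simp [pb]

lemma brac_J_Dm_J_Dm (hJ : C.IsComplexStr J) (f g : A) :
    C.brac (J (C.Dm f)) (J (C.Dm g)) = (2 : ℝ) • J (C.Dm (C.pb J f g)) := by
  have hN := hJ.2 (C.Dm f) (C.Dm g)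
  simp only [nij, nijGen, C.Dm_brac, map_zero, sub_zero, add_zero] at hN
  have h2 : (2 : ℝ) • C.brac (J (C.Dm f)) (J (C.Dm g))
      = (2 : ℝ) • J (C.brac (J (C.Dm f)) (C.Dm g)) := by
    rw [two_smul, two_smul, ← sub_eq_zero, ← hN]
    abel
  rw [smul_right_injective E two_ne_zero h2, brac_Dm_eq_two_smul, LinearMap.map_smul_of_tower]
  rfl

lemma pb_pb_left (hJ : C.IsComplexStr J) (f g h : A) :
    C.pb J (C.pb J f g) h = C.pb J f (C.pb J g h) - C.pb J g (C.pb J f h) := by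
  have hρ := C.anchor_brac (J (C.Dm f)) (J (C.Dm g)) h
  simp only [C.brac_J_Dm_J_Dm hJ, anchor_real_smul, anchor_J_Dm_eq_two_smul_pb,
    Derivation.map_smul] at hρ
  have h4 : (4 : ℝ) • C.pb J (C.pb J f g) h
      = (4 : ℝ) • (C.pb J f (C.pb J g h) - C.pb J g (C.pb J f h)) := by
    linear_combination (norm := module) hρ
  exact smul_right_injective A (by norm_num : (4 : ℝ) ≠ 0) h4

end CourantAlgebroid

theorem stmt2 {A E : Type} [CommRing A] [Algebra ℝ A] [AddCommGroup E] [Module ℝ E]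
    [Module A E] [IsScalarTower ℝ A E] (C : CourantAlgebroid A E) (J : E →ₗ[A] E)
    (hJ : C.IsComplexStr J) :
    ∀ f g h : A,
      C.pb J (C.pb J f g) h + C.pb J (C.pb J g h) f + C.pb J (C.pb J h f) g = 0 := by
  intro f g h
  rw [C.pb_pb_left hJ, C.pb_antisymm hJ.1 f (C.pb J g h), C.pb_antisymm hJ.1 f h,
    C.pb_antisymm hJ.1 g (-C.pb J h f), C.pb_neg_left]
  ring
end

section
/- Let (I,J,K) be an almost hypercomplex structure on E. If ∇¹ and ∇² are hypercomplex connections that both satisfy ∇I = ∇J = ∇K = 0 and T^∇(U,V) = I(D⟨U,IV⟩) + J(D⟨U,JV⟩) + K(D⟨U,KV⟩) for all U, V ∈ E, then ∇¹ = ∇². -/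
open scoped TensorProduct
open CourantAlgebroid

/-!
The difference `S = ∇¹ - ∇²` is symmetric, since both torsions agree, and commutes with `I` and
`J` in its second slot. Moving `I` and `J` through
both slots of `S (I U) (J V)` in the two possible orders gives `I J S(U,V) = J I S(U,V)`, whereas
`I J = K = -J I`; hence `S = 0`.
-/

theorem eq_zero_of_symm_of_comm_of_anticomm {M : Type*} [Zero M] (S : M → M → M) (F G : M → M)
    (hS : ∀ U V, S U V = S V U) (hF : ∀ U V, S U (F V) = F (S U V))
    (hG : ∀ U V, S U (G V) = G (S U V)) (hFG : ∀ x, F (G x) = G (F x) → x = 0) (U V : M) :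
    S U V = 0 :=
  hFG _ <| calc
    F (G (S U V)) = S (F U) (G V) := by rw [hS (F U), hF, hS (G V), hG]
    _ = G (F (S U V)) := by rw [hG, hS (F U) V, hF, hS V U]

namespace CourantAlgebroid.IsAlmostHypercomplex

variable {A E : Type} [CommRing A] [Algebra ℝ A] [AddCommGroup E] [Module ℝ E]
  [Module A E] [IsScalarTower ℝ A E] {C : CourantAlgebroid A E} {I J K : E →ₗ[A] E}

theorem I_J (h : C.IsAlmostHypercomplex I J K) (x : E) : I (J x) = K x := by
  obtain ⟨-, -, ⟨hKK, -⟩, hIJK⟩ := h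
  simpa [hKK] using hIJK (-K x)

theorem J_K (h : C.IsAlmostHypercomplex I J K) (x : E) : J (K x) = I x := by
  obtain ⟨⟨hII, -⟩, -, -, hIJK⟩ := h
  simpa [hII] using congrArg I (hIJK x)

theorem J_I (h : C.IsAlmostHypercomplex I J K) (x : E) : J (I x) = -K x := by
  rw [← h.J_K, h.2.1.1]

theorem eq_zero_of_I_J_eq_J_I (h : C.IsAlmostHypercomplex I J K) {x : E}
    (hx : I (J x) = J (I x)) : x = 0 := by
  rw [h.I_J, h.J_I] at hx
  have h2Kx : (2 : ℝ) • K x = 0 := by rw [two_smul]; exact eq_neg_iff_add_eq_zero.mp hx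
  have hKx : K x = 0 := (smul_eq_zero.mp h2Kx).resolve_left two_ne_zero
  simpa [h.2.2.1.1] using congrArg K hKx

end CourantAlgebroid.IsAlmostHypercomplex

namespace CourantAlgebroid

variable {A E : Type} [CommRing A] [Algebra ℝ A] [AddCommGroup E] [Module ℝ E]
  [Module A E] [IsScalarTower ℝ A E]

theorem sub_apply_symm_of_torsion_eq (C : CourantAlgebroid A E) {D1 D2 : E →ₗ[ℝ] E →ₗ[ℝ] E}
    (hT : ∀ U V, C.torsion D1 U V = C.torsion D2 U V) (U V : E) :
    (D1 - D2) U V = (D1 - D2) V U := by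
  have := hT U V
  simp only [torsion, sub_left_inj] at this
  simp only [LinearMap.sub_apply]
  rwa [sub_eq_sub_iff_sub_eq_sub]

end CourantAlgebroid

theorem LinearMap.sub_apply_comm {R M Φ : Type*} [CommRing R] [AddCommGroup M] [Module R M]
    [FunLike Φ M M] [AddMonoidHomClass Φ M M] {F : Φ} {D1 D2 : M →ₗ[R] M →ₗ[R] M}
    (h1 : ∀ U V, D1 U (F V) = F (D1 U V)) (h2 : ∀ U V, D2 U (F V) = F (D2 U V)) (U V : M) :
    (D1 - D2) U (F V) = F ((D1 - D2) U V) := by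
  simp only [LinearMap.sub_apply, h1, h2, map_sub]

theorem stmt7_general {A E : Type} [CommRing A] [Algebra ℝ A] [AddCommGroup E] [Module ℝ E]
    [Module A E] [IsScalarTower ℝ A E] (C : CourantAlgebroid A E) (I J K : E →ₗ[A] E)
    (h : C.IsAlmostHypercomplex I J K) (D1 D2 : E →ₗ[ℝ] E →ₗ[ℝ] E)
    (h1I : ∀ U V : E, D1 U (I V) = I (D1 U V))
    (h1J : ∀ U V : E, D1 U (J V) = J (D1 U V))
    (h2I : ∀ U V : E, D2 U (I V) = I (D2 U V))
    (h2J : ∀ U V : E, D2 U (J V) = J (D2 U V))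
    (h1T : ∀ U V : E, C.torsion D1 U V =
      I (C.Dm (C.pair U (I V))) + J (C.Dm (C.pair U (J V))) + K (C.Dm (C.pair U (K V))))
    (h2T : ∀ U V : E, C.torsion D2 U V =
      I (C.Dm (C.pair U (I V))) + J (C.Dm (C.pair U (J V))) + K (C.Dm (C.pair U (K V)))) :
    D1 = D2 := by
  have hS := C.sub_apply_symm_of_torsion_eq (fun U V => (h1T U V).trans (h2T U V).symm)
  refine sub_eq_zero.mp (LinearMap.ext₂ fun U V => ?_)
  exact eq_zero_of_symm_of_comm_of_anticomm (fun U V => (D1 - D2) U V) (fun x => I x)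
    (fun x => J x) hS (LinearMap.sub_apply_comm h1I h2I)
    (LinearMap.sub_apply_comm h1J h2J)
    (fun _ => h.eq_zero_of_I_J_eq_J_I) U V

theorem stmt7 {A E : Type} [CommRing A] [Algebra ℝ A] [AddCommGroup E] [Module ℝ E]
    [Module A E] [IsScalarTower ℝ A E] (C : CourantAlgebroid A E) (I J K : E →ₗ[A] E)
    (h : C.IsAlmostHypercomplex I J K) (D1 D2 : E →ₗ[ℝ] E →ₗ[ℝ] E)
    (h1 : C.IsHConn I J K D1) (h2 : C.IsHConn I J K D2)
    (h1I : ∀ U V : E, D1 U (I V) = I (D1 U V))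
    (h1J : ∀ U V : E, D1 U (J V) = J (D1 U V))
    (h1K : ∀ U V : E, D1 U (K V) = K (D1 U V))
    (h2I : ∀ U V : E, D2 U (I V) = I (D2 U V))
    (h2J : ∀ U V : E, D2 U (J V) = J (D2 U V))
    (h2K : ∀ U V : E, D2 U (K V) = K (D2 U V))
    (h1T : ∀ U V : E, C.torsion D1 U V =
      I (C.Dm (C.pair U (I V))) + J (C.Dm (C.pair U (J V))) + K (C.Dm (C.pair U (K V))))
    (h2T : ∀ U V : E, C.torsion D2 U V =
      I (C.Dm (C.pair U (I V))) + J (C.Dm (C.pair U (J V))) + K (C.Dm (C.pair U (K V)))) :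
    D1 = D2 :=
  stmt7_general C I J K h D1 D2 h1I h1J h2I h2J h1T h2T
end

section
/- Let (I,J,K) be an almost hypercomplex structure on E and define ∇ : E × E → E by ∇_U V = −(1/2)·K(JV∘IU − J(V∘IU) − I(JV∘U) + JI(V∘U)). Then for all U, V ∈ E: T^∇(U,V) − (1/2)·K(N(I,J)(U,V)) = I(D⟨U,IV⟩) + J(D⟨U,JV⟩) + K(D⟨U,KV⟩). -/
open scoped TensorProduct
/-! Symmetrizing every bracket of `∇_U V` with `x ∘ y + y ∘ x = 2 D⟨x,y⟩` turns `∇_U V − ∇_V U`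
into `(1/2)(U ∘ V − V ∘ U) + (1/2) K N(I,J)(U,V)` plus `D`-terms. The quaternionic relations
together with the skew-adjointness of `I` bring those `D`-terms to the form
`I D⟨U,IV⟩ + J D⟨U,JV⟩ + K D⟨U,KV⟩`. -/

namespace CourantAlgebroid

variable {A E : Type} [CommRing A] [Algebra ℝ A]
    [AddCommGroup E] [Module ℝ E] [Module A E] [IsScalarTower ℝ A E]

theorem brac_eq_sub_brac_swap (C : CourantAlgebroid A E) (x y : E) :
    C.brac x y = (2 : ℝ) • C.Dm (C.pair x y) - C.brac y x :=
  eq_sub_of_add_eq (C.brac_add_swap x y)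

variable {C : CourantAlgebroid A E}

namespace IsAlmostComplexStr

variable {J : E →ₗ[A] E} (hJ : C.IsAlmostComplexStr J)
include hJ

theorem apply_apply (e : E) : J (J e) = -e := hJ.1 e

theorem pair_apply_left (x y : E) : C.pair (J x) y = -C.pair x (J y) := by
  rw [← hJ.2 x (J y), hJ.apply_apply, map_neg, neg_neg]

theorem pair_apply_right (x y : E) : C.pair x (J y) = -C.pair y (J x) := by
  rw [C.pair_symm, hJ.pair_apply_left]

end IsAlmostComplexStr

namespace IsAlmostHypercomplex

variable {I J K : E →ₗ[A] E} (h : C.IsAlmostHypercomplex I J K)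
include h

theorem I_J_apply (e : E) : I (J e) = K e := by
  simpa [h.2.2.1.apply_apply] using h.2.2.2 (K e)

theorem J_K_apply (e : E) : J (K e) = I e := by
  simpa [h.1.apply_apply] using congrArg I (h.2.2.2 e)

theorem I_K_apply (e : E) : I (K e) = -J e := by
  rw [← h.I_J_apply, h.1.apply_apply]

theorem K_J_apply (e : E) : K (J e) = -I e := by
  rw [← h.I_J_apply, h.2.1.apply_apply, map_neg]

theorem K_I_apply (e : E) : K (I e) = J e := by
  rw [← h.J_K_apply, h.K_J_apply, h.I_K_apply, neg_neg]

theorem J_I_apply (e : E) : J (I e) = -K e := by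
  rw [← h.J_K_apply, h.2.1.apply_apply]

end IsAlmostHypercomplex

end CourantAlgebroid

open CourantAlgebroid

theorem stmt8 {A E : Type} [CommRing A] [Algebra ℝ A] [AddCommGroup E] [Module ℝ E]
    [Module A E] [IsScalarTower ℝ A E] (C : CourantAlgebroid A E) (I J K : E →ₗ[A] E)
    (h : C.IsAlmostHypercomplex I J K) :
    ∀ U V : E,
      C.hconn I J K U V - C.hconn I J K V U - (1/2 : ℝ) • (C.brac U V - C.brac V U) -
        (1/2 : ℝ) • K (C.nij I J U V) =
      I (C.Dm (C.pair U (I V))) + J (C.Dm (C.pair U (J V))) + K (C.Dm (C.pair U (K V))) := by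
  intro U V
  simp only [hconn, nij, nijGen]
  rw [C.brac_eq_sub_brac_swap (J V) (I U), C.brac_eq_sub_brac_swap V (I U),
    C.brac_eq_sub_brac_swap (J V) U, C.brac_eq_sub_brac_swap V U,
    h.1.pair_apply_right (J V) U, h.I_J_apply, h.1.pair_apply_right V U,
    C.pair_symm (J V) U, C.pair_symm V U]
  simp only [map_add, map_sub, map_neg, LinearMap.map_smul_of_tower, smul_sub, smul_add, smul_neg,
    h.I_J_apply, h.J_I_apply, h.K_I_apply, h.K_J_apply, h.2.2.1.apply_apply]
  module
end
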